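/- arXiv:2204.02375 — 2 statements merged into one kernel-verified Lean document; each statement's English description precedes it below -/
import Mathlib

section
/- Let λ ∈ ℂ and suppose (ξ, η) with ξ ∈ H¹(0,1), η ∈ H²(0,1) ∩ H¹₀(0,1), ξ(0) = ξ(1), satisfies ξ' + η' = λξ and η'' + η' + ξ' = λη on (0,1), with (ξ, η) ≠ (0,0). Then Re(λ) = -‖η'‖²_{L²(0,1)} / (‖ξ‖²_{L²} + ‖η‖²_{L²}); in particular Re(λ) ≤ 0, and if additionally λ ≠ 0 then Re(λ) < 0. -/
open Set intervalIntegral ContDiff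

private lemma key_alg (lam a b d e f : ℂ) (h1 : d + e = lam * a) (h2 : f + e + d = lam * b) :
    ((1/2 : ℂ) * ((starRingEnd ℂ) d * a + (starRingEnd ℂ) a * d)
      + (1/2 : ℂ) * ((starRingEnd ℂ) e * b + (starRingEnd ℂ) b * e)
      + ((starRingEnd ℂ) e * e + (starRingEnd ℂ) b * f)
      + ((starRingEnd ℂ) d * b + (starRingEnd ℂ) a * e)).re
    = lam.re * (‖a‖ ^ 2 + ‖b‖ ^ 2) + ‖e‖ ^ 2 := by
  have hf : f = lam * b - e - d := by linear_combination h2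
  have hd : d = lam * a - e := by linear_combination h1
  subst hf hd
  simp only [Complex.sq_norm, Complex.normSq_apply,
    Complex.mul_re, Complex.mul_im, Complex.add_re, Complex.add_im,
    Complex.sub_re, Complex.sub_im, Complex.conj_re, Complex.conj_im,
    Complex.div_re, Complex.div_im, Complex.one_re, Complex.one_im,
    Complex.re_ofNat, Complex.im_ofNat]
  ring

private lemma aux_eqOn_zero {f : ℝ → ℝ} (hf : Continuous f) (h0 : ∀ x, 0 ≤ f x)
    (hI : ∫ x in (0:ℝ)..1, f x = 0) : ∀ x ∈ Icc (0:ℝ) 1, f x = 0 := by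
  have hint : IntervalIntegrable f MeasureTheory.volume 0 1 := hf.intervalIntegrable _ _
  have hae : f =ᵐ[MeasureTheory.volume.restrict (Ioc (0:ℝ) 1)] 0 :=
    (intervalIntegral.integral_eq_zero_iff_of_le_of_nonneg_ae (by norm_num)
      (Filter.Eventually.of_forall h0) hint).mp hI
  have hnull : MeasureTheory.volume.restrict (Ioc (0:ℝ) 1) {x | f x ≠ 0} = 0 :=
    MeasureTheory.ae_iff.mp hae
  have hmeas : MeasurableSet {x | f x ≠ 0} :=
    (isOpen_compl_singleton.preimage hf).measurableSet
  have hnull2 : MeasureTheory.volume ({x | f x ≠ 0} ∩ Ioo (0:ℝ) 1) = 0 := by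
    have h1 : MeasureTheory.volume ({x | f x ≠ 0} ∩ Ioc (0:ℝ) 1) = 0 := by
      rw [← MeasureTheory.Measure.restrict_apply hmeas]; exact hnull
    exact MeasureTheory.measure_mono_null
      (Set.inter_subset_inter_right _ Set.Ioo_subset_Ioc_self) h1
  have hIoo : Set.EqOn f 0 (Ioo (0:ℝ) 1) := by
    intro x hx
    by_contra hfx
    have hopen : IsOpen ({y | f y ≠ 0} ∩ Ioo (0:ℝ) 1) :=
      (isOpen_compl_singleton.preimage hf).inter isOpen_Ioo
    exact (hopen.measure_pos MeasureTheory.volume ⟨x, hfx, hx⟩).ne' hnull2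
  have hcl := hIoo.closure hf continuous_const
  rw [closure_Ioo (by norm_num : (0:ℝ) ≠ 1)] at hcl
  exact fun x hx => hcl hx

private lemma aux_conj_deriv {f : ℝ → ℂ} {f' : ℂ} {x : ℝ} (h : HasDerivAt f f' x) :
    HasDerivAt (fun y => (starRingEnd ℂ) (f y)) ((starRingEnd ℂ) f') x := by
  exact (Complex.conjCLE.toContinuousLinearMap.hasFDerivAt.comp_hasDerivAt x h)

private lemma aux_re_deriv {f : ℝ → ℂ} {f' : ℂ} {x : ℝ} (h : HasDerivAt f f' x) :
    HasDerivAt (fun y => (f y).re) f'.re x := by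
  exact (Complex.reCLM.hasFDerivAt.comp_hasDerivAt x h)

/-- For a nontrivial eigenfunction `(ξ, η)` of the adjoint operator, the eigenvalue `λ`
satisfies `Re λ = -‖η'‖² / (‖ξ‖² + ‖η‖²)`; in particular `Re λ ≤ 0`, and `Re λ < 0`
whenever `λ ≠ 0`. -/
theorem eigenvalue_real_part_formula (lam : ℂ) (ξ η : ℝ → ℂ)
    (hξ : ContDiff ℝ (⊤ : ℕ∞) ξ) (hη : ContDiff ℝ (⊤ : ℕ∞) η)
    (heq1 : ∀ x ∈ Set.Ioo (0 : ℝ) 1, deriv ξ x + deriv η x = lam * ξ x)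
    (heq2 : ∀ x ∈ Set.Ioo (0 : ℝ) 1,
      iteratedDeriv 2 η x + deriv η x + deriv ξ x = lam * η x)
    (hbc : ξ 0 = ξ 1) (hb0 : η 0 = 0) (hb1 : η 1 = 0)
    (hnt : ¬ ∀ x ∈ Set.Icc (0 : ℝ) 1, ξ x = 0 ∧ η x = 0) :
    lam.re = -(∫ x in (0 : ℝ)..1, ‖deriv η x‖ ^ 2) /
        ((∫ x in (0 : ℝ)..1, ‖ξ x‖ ^ 2) + ∫ x in (0 : ℝ)..1, ‖η x‖ ^ 2) ∧
    lam.re ≤ 0 ∧ (lam ≠ 0 → lam.re < 0) := by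
  have h01 : (0:ℝ) < 1 := one_pos
  have hξi : ContDiff ℝ ∞ ξ := hξ.of_le (mod_cast le_top)
  have hηi : ContDiff ℝ ∞ η := hη.of_le (mod_cast le_top)
  have hξd : Differentiable ℝ ξ := (contDiff_infty_iff_deriv.mp hξi).1
  have hηd : Differentiable ℝ η := (contDiff_infty_iff_deriv.mp hηi).1
  have hξ' : ContDiff ℝ ∞ (deriv ξ) := (contDiff_infty_iff_deriv.mp hξi).2
  have hη' : ContDiff ℝ ∞ (deriv η) := (contDiff_infty_iff_deriv.mp hηi).2
  have hη'd : Differentiable ℝ (deriv η) := (contDiff_infty_iff_deriv.mp hη').1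
  have hη'' : Continuous (deriv (deriv η)) := (contDiff_infty_iff_deriv.mp hη').2.continuous
  have hξ'c : Continuous (deriv ξ) := hξ'.continuous
  have hη'c : Continuous (deriv η) := hη'.continuous
  have hξc : Continuous ξ := hξ.continuous
  have hηc : Continuous η := hη.continuous
  have hit : ∀ x : ℝ, iteratedDeriv 2 η x = deriv (deriv η) x := by
    intro x; simp [iteratedDeriv_succ, iteratedDeriv_zero]
  set c : ℂ → ℂ := fun z => (starRingEnd ℂ) z with hcdef
  set G : ℝ → ℝ := fun x =>
    ((1/2 : ℂ) * (c (deriv ξ x) * ξ x + c (ξ x) * deriv ξ x)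
      + (1/2 : ℂ) * (c (deriv η x) * η x + c (η x) * deriv η x)
      + (c (deriv η x) * deriv η x + c (η x) * deriv (deriv η) x)
      + (c (deriv ξ x) * η x + c (ξ x) * deriv η x)).re with hGdef
  have hΨderiv : ∀ x : ℝ, HasDerivAt (fun y =>
      ((1/2 : ℂ) * (c (ξ y) * ξ y) + (1/2 : ℂ) * (c (η y) * η y)
        + c (η y) * deriv η y + c (ξ y) * η y).re) (G x) x := by
    intro x
    have d1 := ((aux_conj_deriv (hξd x).hasDerivAt).mul (hξd x).hasDerivAt).const_mul (1/2:ℂ)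
    have d2 := ((aux_conj_deriv (hηd x).hasDerivAt).mul (hηd x).hasDerivAt).const_mul (1/2:ℂ)
    have d3 := (aux_conj_deriv (hηd x).hasDerivAt).mul (hη'd x).hasDerivAt
    have d4 := (aux_conj_deriv (hξd x).hasDerivAt).mul (hηd x).hasDerivAt
    exact aux_re_deriv (((d1.add d2).add d3).add d4)
  have hcc : ∀ {g : ℝ → ℂ}, Continuous g → Continuous fun x => c (g x) :=
    fun hg => Complex.continuous_conj.comp hg
  have hGcont : Continuous G := by
    apply Complex.continuous_re.comp
    exact ((((continuous_const.mul (((hcc hξ'c).mul hξc).add ((hcc hξc).mul hξ'c))).add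
      (continuous_const.mul (((hcc hη'c).mul hηc).add ((hcc hηc).mul hη'c)))).add
      (((hcc hη'c).mul hη'c).add ((hcc hηc).mul hη''))).add
      (((hcc hξ'c).mul hηc).add ((hcc hξc).mul hη'c)))
  have hFTC : ∫ x in (0:ℝ)..1, G x = 0 := by
    rw [intervalIntegral.integral_eq_sub_of_hasDerivAt (fun x _ => hΨderiv x)
      (hGcont.intervalIntegrable 0 1)]
    simp [hcdef, hb0, hb1, hbc, map_zero]
  have hae1 : ∀ᵐ x : ℝ ∂MeasureTheory.volume, x ≠ (1:ℝ) := by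
    refine MeasureTheory.ae_iff.mpr ?_
    simp [Set.setOf_eq_eq_singleton]
  have hcongr : ∫ x in (0:ℝ)..1, G x
      = ∫ x in (0:ℝ)..1, (lam.re * (‖ξ x‖^2 + ‖η x‖^2) + ‖deriv η x‖^2) := by
    refine intervalIntegral.integral_congr_ae ?_
    filter_upwards [hae1] with x hx1 hmem
    rw [Set.uIoc_of_le (le_of_lt h01)] at hmem
    have hxIoo : x ∈ Set.Ioo (0:ℝ) 1 := ⟨hmem.1, lt_of_le_of_ne hmem.2 hx1⟩
    have e1 := heq1 x hxIoo
    have e2 := heq2 x hxIoo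
    rw [hit x] at e2
    exact key_alg lam (ξ x) (η x) (deriv ξ x) (deriv η x) (deriv (deriv η) x) e1 e2
  have i1 : IntervalIntegrable (fun x => ‖ξ x‖^2) MeasureTheory.volume 0 1 :=
    ((hξc.norm.pow 2).intervalIntegrable _ _)
  have i2 : IntervalIntegrable (fun x => ‖η x‖^2) MeasureTheory.volume 0 1 :=
    ((hηc.norm.pow 2).intervalIntegrable _ _)
  have i3 : IntervalIntegrable (fun x => ‖deriv η x‖^2) MeasureTheory.volume 0 1 :=
    ((hη'c.norm.pow 2).intervalIntegrable _ _)
  have hsplit : ∫ x in (0:ℝ)..1, (lam.re * (‖ξ x‖^2 + ‖η x‖^2) + ‖deriv η x‖^2)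
      = lam.re * ((∫ x in (0:ℝ)..1, ‖ξ x‖^2) + ∫ x in (0:ℝ)..1, ‖η x‖^2)
        + ∫ x in (0:ℝ)..1, ‖deriv η x‖^2 := by
    rw [intervalIntegral.integral_add ((i1.add i2).const_mul _) i3,
      intervalIntegral.integral_const_mul, intervalIntegral.integral_add i1 i2]
  have hmain : lam.re * ((∫ x in (0:ℝ)..1, ‖ξ x‖^2) + ∫ x in (0:ℝ)..1, ‖η x‖^2)
      + ∫ x in (0:ℝ)..1, ‖deriv η x‖^2 = 0 := by
    rw [← hsplit, ← hcongr]; exact hFTC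
  have hSξ0 : 0 ≤ ∫ x in (0:ℝ)..1, ‖ξ x‖^2 :=
    intervalIntegral.integral_nonneg (le_of_lt h01) (fun x _ => sq_nonneg _)
  have hSη0 : 0 ≤ ∫ x in (0:ℝ)..1, ‖η x‖^2 :=
    intervalIntegral.integral_nonneg (le_of_lt h01) (fun x _ => sq_nonneg _)
  have hN0 : 0 ≤ ∫ x in (0:ℝ)..1, ‖deriv η x‖^2 :=
    intervalIntegral.integral_nonneg (le_of_lt h01) (fun x _ => sq_nonneg _)
  have hSpos : 0 < (∫ x in (0:ℝ)..1, ‖ξ x‖^2) + ∫ x in (0:ℝ)..1, ‖η x‖^2 := by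
    rcases (lt_or_eq_of_le (add_nonneg hSξ0 hSη0)) with h | h
    · exact h
    · exfalso
      have hA : ∫ x in (0:ℝ)..1, ‖ξ x‖^2 = 0 := by linarith
      have hB : ∫ x in (0:ℝ)..1, ‖η x‖^2 = 0 := by linarith
      refine hnt (fun x hx => ⟨?_, ?_⟩)
      · have := aux_eqOn_zero (hξc.norm.pow 2) (fun x => sq_nonneg _) hA x hx
        simpa using this
      · have := aux_eqOn_zero (hηc.norm.pow 2) (fun x => sq_nonneg _) hB x hx
        simpa using this
  have hform : lam.re = -(∫ x in (0:ℝ)..1, ‖deriv η x‖^2) /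
      ((∫ x in (0:ℝ)..1, ‖ξ x‖^2) + ∫ x in (0:ℝ)..1, ‖η x‖^2) := by
    rw [eq_div_iff hSpos.ne']
    linarith
  have hle : lam.re ≤ 0 := by
    rw [hform, neg_div]
    have := div_nonneg hN0 hSpos.le
    linarith
  refine ⟨hform, hle, ?_⟩
  intro hlam
  rcases lt_or_eq_of_le hle with h | h
  · exact h
  · exfalso
    have hN : ∫ x in (0:ℝ)..1, ‖deriv η x‖^2 = 0 := by
      rw [h] at hmain; linarith
    have hd0 : ∀ x ∈ Icc (0:ℝ) 1, deriv η x = 0 := by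
      intro x hx
      have := aux_eqOn_zero (hη'c.norm.pow 2) (fun x => sq_nonneg _) hN x hx
      simpa using this
    have hη0 : ∀ x ∈ Icc (0:ℝ) 1, η x = 0 := by
      intro x hx
      have hFTCx : ∫ t in (0:ℝ)..x, deriv η t = η x - η 0 :=
        intervalIntegral.integral_eq_sub_of_hasDerivAt (fun t _ => (hηd t).hasDerivAt)
          (hη'c.intervalIntegrable _ _)
      have hz : ∫ t in (0:ℝ)..x, deriv η t = 0 := by
        rw [intervalIntegral.integral_congr (g := fun _ => (0:ℂ)) ?_,
          intervalIntegral.integral_zero]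
        intro t ht
        rw [Set.uIcc_of_le hx.1] at ht
        exact hd0 t ⟨ht.1, le_trans ht.2 hx.2⟩
      rw [hb0, sub_zero] at hFTCx
      rw [← hFTCx, hz]
    have hξ0 : Set.EqOn ξ 0 (Set.Ioo (0:ℝ) 1) := by
      intro x hx
      have hdx : deriv η x = 0 := hd0 x (Set.Ioo_subset_Icc_self hx)
      have hd2 : deriv (deriv η) x = 0 := by
        have hev : deriv η =ᶠ[nhds x] (fun _ => (0:ℂ)) :=
          Filter.eventuallyEq_of_mem (Ioo_mem_nhds hx.1 hx.2)
            (fun y hy => hd0 y (Set.Ioo_subset_Icc_self hy))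
        rw [hev.deriv_eq]
        exact deriv_const x 0
      have e2 := heq2 x hx
      rw [hit x, hd2, hdx, hη0 x (Set.Ioo_subset_Icc_self hx)] at e2
      have hdξ : deriv ξ x = 0 := by simpa using e2
      have e1 := heq1 x hx
      rw [hdξ, hdx] at e1
      have hz2 : lam * ξ x = 0 := by simpa using e1.symm
      exact (mul_eq_zero.mp hz2).resolve_left hlam
    have hξIcc := hξ0.closure hξc continuous_const
    rw [closure_Ioo (by norm_num : (0:ℝ) ≠ 1)] at hξIcc
    exact hnt (fun x hx => ⟨hξIcc hx, hη0 x hx⟩)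
end

section
/- Let A be the operator on L²(0,1) × L²(0,1) given by A(ρ, u) = (-ρ' - u', -ρ' + u'' - u') with domain D(A) = {(ρ, u) ∈ H¹ × H² : ρ(0) = ρ(1), u(0) = u(1) = 0}. Then A is dissipative: for all (ρ, u) ∈ D(A), Re⟨A(ρ,u), (ρ,u)⟩ = -∫₀¹ |u'(x)|² dx ≤ 0. -/
open intervalIntegral

/-- Dissipativity of the operator `A(ρ,u) = (-ρ' - u', -ρ' + u'' - u')` with
`ρ(0) = ρ(1)` and `u(0) = u(1) = 0`:
`Re⟨A(ρ,u),(ρ,u)⟩ = -∫₀¹ |u'|² ≤ 0`. -/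
theorem operator_A_dissipative (ρ u : ℝ → ℂ)
    (hρ : ContDiff ℝ (⊤ : ℕ∞) ρ) (hu : ContDiff ℝ (⊤ : ℕ∞) u)
    (hbρ : ρ 0 = ρ 1) (hbu0 : u 0 = 0) (hbu1 : u 1 = 0) :
    (∫ x in (0 : ℝ)..1,
        ((-(deriv ρ x) - deriv u x) * (starRingEnd ℂ) (ρ x)
          + (-(deriv ρ x) + iteratedDeriv 2 u x - deriv u x) * (starRingEnd ℂ) (u x))).re
      = -∫ x in (0 : ℝ)..1, ‖deriv u x‖ ^ 2 ∧
    (∫ x in (0 : ℝ)..1,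
        ((-(deriv ρ x) - deriv u x) * (starRingEnd ℂ) (ρ x)
          + (-(deriv ρ x) + iteratedDeriv 2 u x - deriv u x) * (starRingEnd ℂ) (u x))).re
      ≤ 0 := by
  set f : ℝ → ℂ := fun x =>
    ((-(deriv ρ x) - deriv u x) * (starRingEnd ℂ) (ρ x)
      + (-(deriv ρ x) + iteratedDeriv 2 u x - deriv u x) * (starRingEnd ℂ) (u x)) with hf
  -- differentiability facts
  have hρdiff : Differentiable ℝ ρ := hρ.differentiable (by simp)
  have hudiff : Differentiable ℝ u := hu.differentiable (by simp)
  have hρ' : ContDiff ℝ (↑(⊤:ℕ∞)) (deriv ρ) := (contDiff_infty_iff_deriv.mp (hρ.of_le (by simp))).2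
  have hu' : ContDiff ℝ (↑(⊤:ℕ∞)) (deriv u) := (contDiff_infty_iff_deriv.mp (hu.of_le (by simp))).2
  have hu'diff : Differentiable ℝ (deriv u) := hu'.differentiable (by simp)
  have hu'' : ContDiff ℝ (↑(⊤:ℕ∞)) (deriv (deriv u)) := (contDiff_infty_iff_deriv.mp hu').2
  have hiter : ∀ x, iteratedDeriv 2 u x = deriv (deriv u) x := by
    intro x; simp [iteratedDeriv_succ, iteratedDeriv_zero]
  -- the potential
  set G : ℝ → ℝ := fun x =>
    (-((ρ x * (starRingEnd ℂ) (ρ x)).re) - (u x * (starRingEnd ℂ) (u x)).re) / 2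
      - (ρ x * (starRingEnd ℂ) (u x)).re + (deriv u x * (starRingEnd ℂ) (u x)).re with hG
  have key : ∀ x : ℝ, HasDerivAt G ((f x).re + ‖deriv u x‖ ^ 2) x := by
    intro x
    have hρd : HasDerivAt ρ (deriv ρ x) x := (hρdiff x).hasDerivAt
    have hud : HasDerivAt u (deriv u x) x := (hudiff x).hasDerivAt
    have hu'd : HasDerivAt (deriv u) (deriv (deriv u) x) x := (hu'diff x).hasDerivAt
    have h1 : HasDerivAt (fun x => ρ x * (starRingEnd ℂ) (ρ x))
        (deriv ρ x * (starRingEnd ℂ) (ρ x) + ρ x * (starRingEnd ℂ) (deriv ρ x)) x :=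
      hρd.mul hρd.star
    have h2 : HasDerivAt (fun x => u x * (starRingEnd ℂ) (u x))
        (deriv u x * (starRingEnd ℂ) (u x) + u x * (starRingEnd ℂ) (deriv u x)) x :=
      hud.mul hud.star
    have h3 : HasDerivAt (fun x => ρ x * (starRingEnd ℂ) (u x))
        (deriv ρ x * (starRingEnd ℂ) (u x) + ρ x * (starRingEnd ℂ) (deriv u x)) x :=
      hρd.mul hud.star
    have h4 : HasDerivAt (fun x => deriv u x * (starRingEnd ℂ) (u x))
        (deriv (deriv u) x * (starRingEnd ℂ) (u x) + deriv u x * (starRingEnd ℂ) (deriv u x)) x :=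
      hu'd.mul hud.star
    have r1 := (Complex.reCLM.hasFDerivAt.comp_hasDerivAt x h1)
    have r2 := (Complex.reCLM.hasFDerivAt.comp_hasDerivAt x h2)
    have r3 := (Complex.reCLM.hasFDerivAt.comp_hasDerivAt x h3)
    have r4 := (Complex.reCLM.hasFDerivAt.comp_hasDerivAt x h4)
    have hGd := (((r1.neg.sub r2).div_const 2).sub r3).add r4
    refine hGd.congr_deriv ?_
    have hnorm : ‖deriv u x‖ ^ 2 = (deriv u x).re ^ 2 + (deriv u x).im ^ 2 := by
      rw [Complex.sq_norm, Complex.normSq_apply]; ring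
    simp only [hf, hiter, hnorm, Complex.add_re, Complex.sub_re, Complex.neg_re,
      Complex.mul_re, Complex.mul_im, Complex.add_im, Complex.sub_im, Complex.neg_im,
      Complex.conj_re, Complex.conj_im, ContinuousLinearMap.coe_comp',
      Function.comp_apply, Complex.reCLM_apply]
    ring
  -- continuity / integrability
  have hfC : Continuous f := by
    rw [hf]
    simp only [starRingEnd_apply, funext hiter]
    exact ((hρ'.continuous.neg.sub hu'.continuous).mul hρ.continuous.star).add
      (((hρ'.continuous.neg.add hu''.continuous).sub hu'.continuous).mul hu.continuous.star)
  have hfc : Continuous fun x => (f x).re := Complex.continuous_re.comp hfC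
  have hnc : Continuous fun x => ‖deriv u x‖ ^ 2 := by
    have := hu'.continuous; fun_prop
  have hzero : (∫ x in (0:ℝ)..1, ((f x).re + ‖deriv u x‖ ^ 2)) = G 1 - G 0 :=
    intervalIntegral.integral_eq_sub_of_hasDerivAt (fun x _ => key x)
      ((hfc.add hnc).intervalIntegrable 0 1)
  have hG10 : G 1 - G 0 = 0 := by
    simp [hG, hbu0, hbu1, hbρ]
  have hsplit : (∫ x in (0:ℝ)..1, ((f x).re + ‖deriv u x‖ ^ 2))
      = (∫ x in (0:ℝ)..1, (f x).re) + ∫ x in (0:ℝ)..1, ‖deriv u x‖ ^ 2 :=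
    intervalIntegral.integral_add (hfc.intervalIntegrable 0 1) (hnc.intervalIntegrable 0 1)
  have hre : (∫ x in (0:ℝ)..1, f x).re = ∫ x in (0:ℝ)..1, (f x).re := by
    rw [intervalIntegral.integral_of_le (by norm_num : (0:ℝ) ≤ 1),
        intervalIntegral.integral_of_le (by norm_num : (0:ℝ) ≤ 1)]
    have h := integral_re (μ := MeasureTheory.volume.restrict (Set.Ioc (0:ℝ) 1))
      (f := f) hfC.integrableOn_Ioc
    simpa [RCLike.re_to_complex] using h.symm
  have hpos : 0 ≤ ∫ x in (0:ℝ)..1, ‖deriv u x‖ ^ 2 :=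
    intervalIntegral.integral_nonneg (by norm_num) (fun x _ => by positivity)
  constructor
  · rw [hre]; linarith [hzero, hsplit, hG10]
  · rw [hre]; linarith [hzero, hsplit, hG10]
end
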